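/- Let p > 5 be a prime with −1 a quadratic residue and 2, 3 quadratic non-residues mod p. Define the path system 𝒫_p on the Paley graph G_p by: P_{a,b} = (a,b) if b−a is a quadratic residue; P_{a,b} = (a, a+1, a+2, b) if b−a = 3; and P_{a,b} = (a, (a+b)/2, b) if b−a is a non-residue with b−a ≠ ±3. Then 𝒫_p is a well-defined path system: each listed sequence is a simple path in G_p, and every pair of distinct vertices is assigned exactly one path. -/

import Mathlib

open scoped Classical

/-!
Consecutive vertices of each listed sequence differ by a nonzero square, and since `-1` is a
square this makes them adjacent. In the third case the step is `(b - a) / 2`, a quotient of two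
non-squares, hence a square. Distinctness of the vertices needs `2 ≠ 0`, which holds because a
finite field of characteristic `2` has no non-squares, while `b - a` is a non-square in the
second and third cases.
-/

/-- `a` is a (nonzero) quadratic residue in `ZMod p`. -/
def IsQR (p : ℕ) (a : ZMod p) : Prop := a ≠ 0 ∧ IsSquare a

/-- The Paley graph on `𝔽_p`: `a ~ b` iff `a - b` is a nonzero quadratic residue.
(The adjacency is stated symmetrically; when `-1` is a residue this agrees with
the usual definition.) -/
def paley (p : ℕ) : SimpleGraph (ZMod p) where
  Adj a b := a ≠ b ∧ IsSquare (a - b) ∧ IsSquare (b - a)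
  symm := by refine ⟨?_⟩; intro a b h; exact ⟨h.1.symm, h.2.2, h.2.1⟩
  loopless := by refine ⟨?_⟩; intro a h; exact h.1 rfl

/-- The list of vertices of the path `P_{a,b}` of the path system `𝒫_p`. -/
noncomputable def specList (p : ℕ) (a b : ZMod p) : List (ZMod p) :=
  if IsQR p (b - a) then [a, b]
  else if b - a = 3 then [a, a + 1, a + 2, b]
  else [a, (a + b) * (2 : ZMod p)⁻¹, b]

theorem SimpleGraph.exists_walk_support_eq {V : Type*} {G : SimpleGraph V} {l : List V} {a b : V}
    (hl : l.IsChain G.Adj) (ha : l.head? = some a) (hb : l.getLast? = some b) :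
    ∃ w : G.Walk a b, w.support = l := by
  have hne : l ≠ [] := by rintro rfl; simp at ha
  refine ⟨(Walk.ofSupport l hne hl).copy ?_ ?_, by rw [Walk.support_copy, Walk.support_ofSupport]⟩
  · simpa [List.head?_eq_some_head hne] using ha
  · simpa [List.getLast?_eq_some_getLast hne] using hb

namespace FiniteField

variable {F : Type*} [Field F] [Finite F]

theorem two_ne_zero_of_not_isSquare {x : F} (hx : ¬IsSquare x) : (2 : F) ≠ 0 := fun h2 ↦ by
  have : CharP F 2 := CharTwo.of_one_ne_zero_of_two_eq_zero one_ne_zero h2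
  exact hx (isSquare_of_charTwo' x)

theorem isSquare_mul_of_not_isSquare {x y : F} (hx : ¬IsSquare x) (hy : ¬IsSquare y) :
    IsSquare (x * y) := by
  have := Fintype.ofFinite F
  have hx0 : x ≠ 0 := by rintro rfl; exact hx .zero
  have hy0 : y ≠ 0 := by rintro rfl; exact hy .zero
  rw [← quadraticChar_one_iff_isSquare (mul_ne_zero hx0 hy0), map_mul,
    quadraticChar_neg_one_iff_not_isSquare.mpr hx, quadraticChar_neg_one_iff_not_isSquare.mpr hy]
  rfl

theorem isSquare_div_of_not_isSquare {x y : F} (hx : ¬IsSquare x) (hy : ¬IsSquare y) :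
    IsSquare (x / y) := by
  have hy0 : y ≠ 0 := by rintro rfl; exact hy .zero
  rw [show x / y = x * y / (y * y) by field_simp]
  exact (isSquare_mul_of_not_isSquare hx hy).div (.mul_self y)

end FiniteField

section Field

variable {K : Type*} [Field K] {a b : K}

theorem add_mul_inv_two_sub_left (h2 : (2 : K) ≠ 0) : (a + b) * 2⁻¹ - a = (b - a) * 2⁻¹ := by
  field_simp; ring

theorem sub_add_mul_inv_two_right (h2 : (2 : K) ≠ 0) : b - (a + b) * 2⁻¹ = (b - a) * 2⁻¹ := by
  field_simp; ring

end Field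

theorem paley_adj_of_isQR {p : ℕ} {x y : ZMod p} (h1 : IsSquare (-1 : ZMod p))
    (h : IsQR p (y - x)) : (paley p).Adj x y := by
  refine ⟨fun hxy ↦ h.1 (by simp [hxy]), ?_, h.2⟩
  simpa using h1.mul h.2

section specList

variable {p : ℕ} {a b : ZMod p}

theorem head?_specList : (specList p a b).head? = some a := by
  unfold specList; split_ifs <;> rfl

theorem getLast?_specList : (specList p a b).getLast? = some b := by
  unfold specList; split_ifs <;> rfl

variable [Fact p.Prime]

theorem nodup_specList (hab : a ≠ b) : (specList p a b).Nodup := by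
  have hba : b - a ≠ 0 := sub_ne_zero.mpr hab.symm
  unfold specList
  split_ifs with hqr h3
  · simp [hab]
  · have h2 : (2 : ZMod p) ≠ 0 :=
      FiniteField.two_ne_zero_of_not_isSquare fun hs ↦ hqr ⟨hba, hs⟩
    obtain rfl : b = a + 3 := by linear_combination h3
    have h3' : (3 : ZMod p) ≠ 0 := by simpa using hba
    have h12 : (1 : ZMod p) ≠ 2 := fun h ↦ one_ne_zero (α := ZMod p) (by linear_combination -h)
    have h13 : (1 : ZMod p) ≠ 3 := fun h ↦ h2 (by linear_combination -h)
    have h23 : (2 : ZMod p) ≠ 3 := fun h ↦ one_ne_zero (α := ZMod p) (by linear_combination -h)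
    simp [h2, h3', h12, h13, h23]
  · have h2 : (2 : ZMod p) ≠ 0 :=
      FiniteField.two_ne_zero_of_not_isSquare fun hs ↦ hqr ⟨hba, hs⟩
    have hhalf : (b - a) * 2⁻¹ ≠ 0 := mul_ne_zero hba (inv_ne_zero h2)
    have ham : a ≠ (a + b) * 2⁻¹ :=
      (sub_ne_zero.mp (add_mul_inv_two_sub_left h2 ▸ hhalf)).symm
    have hmb : (a + b) * 2⁻¹ ≠ b := (sub_ne_zero.mp (sub_add_mul_inv_two_right h2 ▸ hhalf)).symm
    simp [hab, ham, hmb]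

theorem isChain_specList (h1 : IsSquare (-1 : ZMod p)) (h2 : ¬IsQR p 2) (hab : a ≠ b) :
    (specList p a b).IsChain (paley p).Adj := by
  have hba : b - a ≠ 0 := sub_ne_zero.mpr hab.symm
  have step : ∀ x : ZMod p, (paley p).Adj x (x + 1) := fun x ↦
    paley_adj_of_isQR h1 (by simpa using ⟨one_ne_zero, .one⟩)
  unfold specList
  split_ifs with hqr h3
  · simpa using paley_adj_of_isQR h1 hqr
  · obtain rfl : b = a + 1 + 1 + 1 := by linear_combination h3
    simp [step, show a + 2 = a + 1 + 1 by ring]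
  · have hnsq : ¬IsSquare (b - a) := fun hs ↦ hqr ⟨hba, hs⟩
    have h2ne : (2 : ZMod p) ≠ 0 := FiniteField.two_ne_zero_of_not_isSquare hnsq
    have hhalf : IsQR p ((b - a) * 2⁻¹) :=
      ⟨mul_ne_zero hba (inv_ne_zero h2ne),
        by simpa [div_eq_mul_inv] using
          FiniteField.isSquare_div_of_not_isSquare hnsq fun hs ↦ h2 ⟨h2ne, hs⟩⟩
    simp only [List.isChain_cons_cons, List.IsChain.singleton, and_true]
    exact ⟨paley_adj_of_isQR h1 (add_mul_inv_two_sub_left h2ne ▸ hhalf),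
      paley_adj_of_isQR h1 (sub_add_mul_inv_two_right h2ne ▸ hhalf)⟩

end specList

theorem stmt_9_general (p : ℕ) [Fact p.Prime]
    (h1 : IsQR p (-1)) (h2 : ¬ IsQR p 2) :
    ∃ P : ∀ a b : ZMod p, (paley p).Walk a b,
      ∀ a b : ZMod p, a ≠ b →
        (P a b).IsPath ∧ (P a b).support = specList p a b := by
  have key (a b : ZMod p) (hab : a ≠ b) : ∃ w : (paley p).Walk a b, w.support = specList p a b :=
    SimpleGraph.exists_walk_support_eq (isChain_specList h1.2 h2 hab) head?_specList
      getLast?_specList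
  choose P hP using key
  refine ⟨fun a b ↦ if hab : a = b then .copy .nil rfl hab else P a b hab, fun a b hab ↦ ?_⟩
  simp only [dif_neg hab]
  rw [SimpleGraph.Walk.isPath_def, hP]
  exact ⟨nodup_specList hab, rfl⟩

theorem stmt_9 (p : ℕ) [Fact p.Prime] (hp : 5 < p)
    (h1 : IsQR p (-1)) (h2 : ¬ IsQR p 2) (h3 : ¬ IsQR p 3) :
    ∃ P : ∀ a b : ZMod p, (paley p).Walk a b,
      ∀ a b : ZMod p, a ≠ b →
        (P a b).IsPath ∧ (P a b).support = specList p a b :=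
  stmt_9_general p h1 h2
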